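/- (Uniqueness in the critical case, general form) If a₁ < 0 < a₂ and |a₁ a₂| = 1, then for R = [[1, a₁],[a₂, 1]] the Skorokhod problem has at most one solution for every continuous driving function f with f(0) ≥ 0. -/
import Mathlib


open Set Matrix

/-- The Skorokhod problem on `[0,∞)` in the nonnegative quadrant of `ℝ²` with
reflection matrix `R` and driving function `f`: `(g, m)` is a solution. -/
def IsSkorokhod (R : Matrix (Fin 2) (Fin 2) ℝ) (f g m : ℝ → Fin 2 → ℝ) : Prop :=
  ContinuousOn g (Set.Ici 0) ∧ ContinuousOn m (Set.Ici 0) ∧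
  (∀ t ∈ Set.Ici (0:ℝ), ∀ j, 0 ≤ g t j) ∧
  m 0 = 0 ∧
  (∀ j, MonotoneOn (fun t => m t j) (Set.Ici 0)) ∧
  (∀ t ∈ Set.Ici (0:ℝ), g t = f t + R.mulVec (m t)) ∧
  (∀ j, ∀ s t, 0 ≤ s → s ≤ t → (∀ r ∈ Set.Icc s t, 0 < g r j) → m s j = m t j)

/-- Uniqueness of solutions of the Skorokhod problem with matrix `R`, for every
continuous driving function `f` with `f 0 ≥ 0`. -/
def SkorokhodUnique (R : Matrix (Fin 2) (Fin 2) ℝ) : Prop :=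
  ∀ f : ℝ → Fin 2 → ℝ, ContinuousOn f (Set.Ici 0) → (∀ j, 0 ≤ f 0 j) →
    ∀ g m g' m', IsSkorokhod R f g m → IsSkorokhod R f g' m' →
      ∀ t ∈ Set.Ici (0:ℝ), g t = g' t ∧ m t = m' t

lemma mulVec_2x2 (a b : ℝ) (v : Fin 2 → ℝ) :
    (!![1, a; b, 1]).mulVec v = ![v 0 + a * v 1, b * v 0 + v 1] := by
  funext i
  fin_cases i <;>
    simp [Matrix.mulVec, dotProduct, Fin.sum_univ_two]

/-- Least element of the closed level set `{s ∈ [0,T] : D s = h}`. -/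
lemma exists_least_level (D : ℝ → ℝ) (T h : ℝ) (hD : ContinuousOn D (Set.Icc 0 T))
    (hne : ∃ s ∈ Set.Icc 0 T, D s = h) :
    ∃ t, t ∈ Set.Icc 0 T ∧ D t = h ∧ ∀ s ∈ Set.Icc 0 T, D s = h → t ≤ s := by
  set Z : Set ℝ := {s | s ∈ Set.Icc 0 T ∧ D s = h} with hZ
  have hZne : Z.Nonempty := hne
  have hZbdd : BddBelow Z := ⟨0, fun x hx => hx.1.1⟩
  have hZcl : IsClosed Z := by
    have hze : Z = Set.Icc 0 T ∩ D ⁻¹' {h} := by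
      ext x
      simp [hZ, Set.mem_setOf_eq]
    rw [hze]
    exact hD.preimage_isClosed_of_isClosed isClosed_Icc isClosed_singleton
  have hmem : sInf Z ∈ Z := hZcl.csInf_mem hZne hZbdd
  exact ⟨sInf Z, hmem.1, hmem.2, fun s hs hsh => csInf_le hZbdd ⟨hs, hsh⟩⟩

/-- Key lemma: at the least time of `[0,T]` where `p - q` attains its maximal
value `h > 0`, the constraint function `G` controlling the growth of `p`
must vanish. -/
lemma skorokhod_key (G p q : ℝ → ℝ) (T t h : ℝ) (hh : 0 < h)
    (hGc : ContinuousOn G (Set.Icc 0 T))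
    (hGpos : ∀ s ∈ Set.Icc 0 T, 0 ≤ G s)
    (hp0 : p 0 = 0)
    (hq0 : 0 ≤ q t)
    (hqmono : MonotoneOn q (Set.Icc 0 T))
    (hconst : ∀ s u, 0 ≤ s → s ≤ u → (∀ r ∈ Set.Icc s u, 0 < G r) → p s = p u)
    (hle : ∀ s ∈ Set.Icc 0 T, p s - q s ≤ h)
    (ht : t ∈ Set.Icc 0 T) (hth : p t - q t = h)
    (hleast : ∀ s ∈ Set.Icc 0 T, p s - q s = h → t ≤ s) :
    G t = 0 := by
  obtain ⟨ht0, htT⟩ := ht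
  have hpt : 0 < p t := by linarith
  have hsub : Set.Icc (0:ℝ) t ⊆ Set.Icc 0 T := Set.Icc_subset_Icc le_rfl htT
  have hzero : ∃ s, s ∈ Set.Icc 0 t ∧ G s = 0 := by
    by_contra hcon
    push_neg at hcon
    have hpos : ∀ r ∈ Set.Icc 0 t, 0 < G r := fun r hr =>
      lt_of_le_of_ne (hGpos r (hsub hr)) (Ne.symm (hcon r hr))
    have h0t := hconst 0 t le_rfl ht0 hpos
    linarith
  set Z : Set ℝ := {s | s ∈ Set.Icc 0 t ∧ G s = 0} with hZ
  have hZne : Z.Nonempty := hzero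
  have hZbdd : BddAbove Z := ⟨t, fun x hx => hx.1.2⟩
  have hZcl : IsClosed Z := by
    have hze : Z = Set.Icc 0 t ∩ G ⁻¹' {0} := by
      ext x
      simp [hZ, Set.mem_setOf_eq]
    rw [hze]
    exact (hGc.mono hsub).preimage_isClosed_of_isClosed isClosed_Icc isClosed_singleton
  have hrZ : sSup Z ∈ Z := hZcl.csSup_mem hZne hZbdd
  have hrt : sSup Z ≤ t := csSup_le hZne fun x hx => hx.1.2
  rcases eq_or_lt_of_le hrt with heq | hlt
  · rw [← heq]; exact hrZ.2
  · exfalso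
    set r := sSup Z with hr
    set u := (r + t) / 2 with hu
    have hru : r < u := by rw [hu]; linarith
    have hut : u < t := by rw [hu]; linarith
    have hu0 : 0 ≤ u := le_trans hrZ.1.1 hru.le
    have hGposu : ∀ s ∈ Set.Icc u t, 0 < G s := by
      intro s hs
      have hs0T : s ∈ Set.Icc 0 T := ⟨le_trans hu0 hs.1, le_trans hs.2 htT⟩
      rcases (hGpos s hs0T).lt_or_eq with h' | h'
      · exact h'
      · exfalso
        have hsZ : s ∈ Z := ⟨⟨le_trans hu0 hs.1, hs.2⟩, h'.symm⟩
        have := le_csSup hZbdd hsZ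
        have := hs.1
        linarith
    have hpu : p u = p t := hconst u t hu0 hut.le hGposu
    have huT : u ∈ Set.Icc 0 T := ⟨hu0, le_trans hut.le htT⟩
    have hqle : q u ≤ q t := hqmono huT ⟨ht0, htT⟩ hut.le
    have hequ : p u - q u = h := le_antisymm (hle u huT) (by linarith)
    have := hleast u huT hequ
    linarith

theorem uniqueness_critical_general (a₁ a₂ : ℝ)
    (h₁ : a₁ < 0) (h₂ : 0 < a₂) (hcrit : |a₁ * a₂| = 1) :
    SkorokhodUnique (!![1, a₁; a₂, 1]) := by
  have hprodneg : a₁ * a₂ < 0 := mul_neg_of_neg_of_pos h₁ h₂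
  have hprod : a₁ * a₂ = -1 := by
    rcases (abs_eq (by norm_num : (0:ℝ) ≤ 1)).mp hcrit with h | h
    · linarith
    · exact h
  set c : ℝ := -a₁ with hcdef
  have hcpos : 0 < c := by rw [hcdef]; linarith
  have hceq : a₁ = -c := by rw [hcdef]; ring
  have hca2 : c * a₂ = 1 := by rw [hcdef]; linarith
  intro f hf hf0 g m g' m' hs hs'
  obtain ⟨hgc, hmc, hgpos, hm0, hmmono, heqn, hconst⟩ := hs
  obtain ⟨hgc', hmc', hgpos', hm0', hmmono', heqn', hconst'⟩ := hs'
  have hgeq : ∀ u ∈ Set.Ici (0:ℝ),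
      g u 0 = f u 0 + (m u 0 + a₁ * m u 1) ∧ g u 1 = f u 1 + (a₂ * m u 0 + m u 1) := by
    intro u hu
    have h' := heqn u hu
    rw [mulVec_2x2] at h'
    constructor
    · rw [h']; simp
    · rw [h']; simp
  have hgeq' : ∀ u ∈ Set.Ici (0:ℝ),
      g' u 0 = f u 0 + (m' u 0 + a₁ * m' u 1) ∧ g' u 1 = f u 1 + (a₂ * m' u 0 + m' u 1) := by
    intro u hu
    have h' := heqn' u hu
    rw [mulVec_2x2] at h'
    constructor
    · rw [h']; simp
    · rw [h']; simp
  have hmn : ∀ s, 0 ≤ s → ∀ j, 0 ≤ m s j := by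
    intro s hsn j
    have h0 : m 0 j = 0 := by rw [hm0]; rfl
    have := hmmono j (Set.mem_Ici.mpr le_rfl) (Set.mem_Ici.mpr hsn) hsn
    simpa [h0] using this
  have hmn' : ∀ s, 0 ≤ s → ∀ j, 0 ≤ m' s j := by
    intro s hsn j
    have h0 : m' 0 j = 0 := by rw [hm0']; rfl
    have := hmmono' j (Set.mem_Ici.mpr le_rfl) (Set.mem_Ici.mpr hsn) hsn
    simpa [h0] using this
  have main : ∀ T, 0 ≤ T → m T = m' T := by
    intro T hT
    have hev : ∀ (w : ℝ → Fin 2 → ℝ), ContinuousOn w (Set.Ici 0) → ∀ j : Fin 2,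
        ContinuousOn (fun s => w s j) (Set.Icc 0 T) := by
      intro w hw j
      exact ((continuous_apply j).comp_continuousOn hw).mono Set.Icc_subset_Ici_self
    have hd1c : ContinuousOn (fun s => m s 0 - m' s 0) (Set.Icc 0 T) :=
      (hev m hmc 0).sub (hev m' hmc' 0)
    have hd1c' : ContinuousOn (fun s => m' s 0 - m s 0) (Set.Icc 0 T) :=
      (hev m' hmc' 0).sub (hev m hmc 0)
    have hd2c : ContinuousOn (fun s => c * (m s 1 - m' s 1)) (Set.Icc 0 T) :=
      continuousOn_const.mul ((hev m hmc 1).sub (hev m' hmc' 1))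
    have hd2c' : ContinuousOn (fun s => c * (m' s 1 - m s 1)) (Set.Icc 0 T) :=
      continuousOn_const.mul ((hev m' hmc' 1).sub (hev m hmc 1))
    have hψc : ContinuousOn
        (fun s => max |m s 0 - m' s 0| (c * |m s 1 - m' s 1|)) (Set.Icc 0 T) :=
      (((hev m hmc 0).sub (hev m' hmc' 0)).abs).sup
        (continuousOn_const.mul (((hev m hmc 1).sub (hev m' hmc' 1)).abs))
    obtain ⟨x₀, hx₀, hmax0⟩ :=
      isCompact_Icc.exists_isMaxOn ⟨0, Set.left_mem_Icc.mpr hT⟩ hψc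
    have hmax : ∀ y ∈ Set.Icc (0:ℝ) T,
        max |m y 0 - m' y 0| (c * |m y 1 - m' y 1|) ≤
          max |m x₀ 0 - m' x₀ 0| (c * |m x₀ 1 - m' x₀ 1|) := fun y hy => hmax0 hy
    set h : ℝ := max |m x₀ 0 - m' x₀ 0| (c * |m x₀ 1 - m' x₀ 1|) with hhdef
    have hb : ∀ s ∈ Set.Icc 0 T, |m s 0 - m' s 0| ≤ h ∧ c * |m s 1 - m' s 1| ≤ h := by
      intro s hsi
      have h4 := hmax s hsi
      exact ⟨le_trans (le_max_left _ _) h4, le_trans (le_max_right _ _) h4⟩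
    rcases le_or_gt h 0 with hh | hh
    · obtain ⟨u1, u2⟩ := hb T ⟨hT, le_rfl⟩
      have e1 : m T 0 - m' T 0 = 0 :=
        abs_eq_zero.mp (le_antisymm (le_trans u1 hh) (abs_nonneg _))
      have e2 : m T 1 - m' T 1 = 0 := by
        have habs2 : |m T 1 - m' T 1| ≤ 0 := by nlinarith [abs_nonneg (m T 1 - m' T 1)]
        exact abs_eq_zero.mp (le_antisymm habs2 (abs_nonneg _))
      funext j
      fin_cases j
      · exact sub_eq_zero.mp e1
      · exact sub_eq_zero.mp e2
    · exfalso
      have hB1 : ∀ s ∈ Set.Icc 0 T, m s 0 - m' s 0 ≤ h := fun s hsi =>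
        (abs_le.mp (hb s hsi).1).2
      have hB1' : ∀ s ∈ Set.Icc 0 T, m' s 0 - m s 0 ≤ h := by
        intro s hsi
        have := (abs_le.mp (hb s hsi).1).1
        linarith
      have hB2 : ∀ s ∈ Set.Icc 0 T, c * (m s 1 - m' s 1) ≤ h := by
        intro s hsi
        have h5 := mul_le_mul_of_nonneg_left (le_abs_self (m s 1 - m' s 1)) hcpos.le
        have := (hb s hsi).2
        linarith
      have hB2' : ∀ s ∈ Set.Icc 0 T, c * (m' s 1 - m s 1) ≤ h := by
        intro s hsi
        have h5 := mul_le_mul_of_nonneg_left (le_abs_self (m' s 1 - m s 1)) hcpos.le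
        rw [abs_sub_comm] at h5
        have := (hb s hsi).2
        linarith
      have hhc : 0 < h / c := div_pos hh hcpos
      -- Step 1: least time with d1 = h forces g·0 = 0 there, hence d2 = h there.
      have step1 : ∀ t1 ∈ Set.Icc 0 T, m t1 0 - m' t1 0 = h →
          (∀ s ∈ Set.Icc 0 T, m s 0 - m' s 0 = h → t1 ≤ s) →
          c * (m t1 1 - m' t1 1) = h := by
        intro t1 ht1 heq1 hl1
        have hg10 : g t1 0 = 0 :=
          skorokhod_key (fun s => g s 0) (fun s => m s 0) (fun s => m' s 0) T t1 h hh
            (hev g hgc 0)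
            (fun s hsi => hgpos s (Set.Icc_subset_Ici_self hsi) 0)
            (by simp [hm0])
            (hmn' t1 ht1.1 0)
            ((hmmono' 0).mono Set.Icc_subset_Ici_self)
            (hconst 0)
            hB1 ht1 heq1 hl1
        have e1 := (hgeq t1 (Set.mem_Ici.mpr ht1.1)).1
        have e2 : 0 ≤ g' t1 0 := hgpos' t1 (Set.mem_Ici.mpr ht1.1) 0
        rw [(hgeq' t1 (Set.mem_Ici.mpr ht1.1)).1] at e2
        rw [hg10] at e1
        rw [hceq] at e1 e2
        have hub := hB2 t1 ht1
        linarith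
      have step2 : ∀ t2 ∈ Set.Icc 0 T, c * (m t2 1 - m' t2 1) = h →
          (∀ s ∈ Set.Icc 0 T, c * (m s 1 - m' s 1) = h → t2 ≤ s) →
          m' t2 0 - m t2 0 = h := by
        intro t2 ht2 heq2 hl2
        have hg21 : g t2 1 = 0 :=
          skorokhod_key (fun s => g s 1) (fun s => m s 1) (fun s => m' s 1) T t2 (h / c) hhc
            (hev g hgc 1)
            (fun s hsi => hgpos s (Set.Icc_subset_Ici_self hsi) 1)
            (by simp [hm0])
            (hmn' t2 ht2.1 1)
            ((hmmono' 1).mono Set.Icc_subset_Ici_self)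
            (hconst 1)
            (fun s hsi => by rw [le_div_iff₀ hcpos]; have := hB2 s hsi; linarith)
            ht2
            (by rw [eq_div_iff (ne_of_gt hcpos)]; linarith)
            (fun s hsi hs2 => hl2 s hsi
              (by rw [eq_div_iff (ne_of_gt hcpos)] at hs2; linarith))
        have e1 := (hgeq t2 (Set.mem_Ici.mpr ht2.1)).2
        have e2 : 0 ≤ g' t2 1 := hgpos' t2 (Set.mem_Ici.mpr ht2.1) 1
        rw [(hgeq' t2 (Set.mem_Ici.mpr ht2.1)).2] at e2
        rw [hg21] at e1
        have e3 : a₂ * (m t2 0 - m' t2 0) + (m t2 1 - m' t2 1) ≤ 0 := by linarith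
        have e4 := mul_le_mul_of_nonneg_left e3 hcpos.le
        have e5 : c * (a₂ * (m t2 0 - m' t2 0) + (m t2 1 - m' t2 1))
            = (c * a₂) * (m t2 0 - m' t2 0) + c * (m t2 1 - m' t2 1) := by ring
        rw [e5, hca2, one_mul, mul_zero] at e4
        have hub := hB1' t2 ht2
        linarith
      have step3 : ∀ t3 ∈ Set.Icc 0 T, m' t3 0 - m t3 0 = h →
          (∀ s ∈ Set.Icc 0 T, m' s 0 - m s 0 = h → t3 ≤ s) →
          c * (m' t3 1 - m t3 1) = h := by
        intro t3 ht3 heq3 hl3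
        have hg10 : g' t3 0 = 0 :=
          skorokhod_key (fun s => g' s 0) (fun s => m' s 0) (fun s => m s 0) T t3 h hh
            (hev g' hgc' 0)
            (fun s hsi => hgpos' s (Set.Icc_subset_Ici_self hsi) 0)
            (by simp [hm0'])
            (hmn t3 ht3.1 0)
            ((hmmono 0).mono Set.Icc_subset_Ici_self)
            (hconst' 0)
            hB1' ht3 heq3 hl3
        have e1 := (hgeq' t3 (Set.mem_Ici.mpr ht3.1)).1
        have e2 : 0 ≤ g t3 0 := hgpos t3 (Set.mem_Ici.mpr ht3.1) 0
        rw [(hgeq t3 (Set.mem_Ici.mpr ht3.1)).1] at e2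
        rw [hg10] at e1
        rw [hceq] at e1 e2
        have hub := hB2' t3 ht3
        linarith
      have step4 : ∀ t4 ∈ Set.Icc 0 T, c * (m' t4 1 - m t4 1) = h →
          (∀ s ∈ Set.Icc 0 T, c * (m' s 1 - m s 1) = h → t4 ≤ s) →
          m t4 0 - m' t4 0 = h := by
        intro t4 ht4 heq4 hl4
        have hg21 : g' t4 1 = 0 :=
          skorokhod_key (fun s => g' s 1) (fun s => m' s 1) (fun s => m s 1) T t4 (h / c) hhc
            (hev g' hgc' 1)
            (fun s hsi => hgpos' s (Set.Icc_subset_Ici_self hsi) 1)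
            (by simp [hm0'])
            (hmn t4 ht4.1 1)
            ((hmmono 1).mono Set.Icc_subset_Ici_self)
            (hconst' 1)
            (fun s hsi => by rw [le_div_iff₀ hcpos]; have := hB2' s hsi; linarith)
            ht4
            (by rw [eq_div_iff (ne_of_gt hcpos)]; linarith)
            (fun s hsi hs2 => hl4 s hsi
              (by rw [eq_div_iff (ne_of_gt hcpos)] at hs2; linarith))
        have e1 := (hgeq' t4 (Set.mem_Ici.mpr ht4.1)).2
        have e2 : 0 ≤ g t4 1 := hgpos t4 (Set.mem_Ici.mpr ht4.1) 1
        rw [(hgeq t4 (Set.mem_Ici.mpr ht4.1)).2] at e2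
        rw [hg21] at e1
        have e3 : a₂ * (m' t4 0 - m t4 0) + (m' t4 1 - m t4 1) ≤ 0 := by linarith
        have e4 := mul_le_mul_of_nonneg_left e3 hcpos.le
        have e5 : c * (a₂ * (m' t4 0 - m t4 0) + (m' t4 1 - m t4 1))
            = (c * a₂) * (m' t4 0 - m t4 0) + c * (m' t4 1 - m t4 1) := by ring
        rw [e5, hca2, one_mul, mul_zero] at e4
        have hub := hB1 t4 ht4
        linarith
      -- transitions between nonempty level sets
      have T12 : (∃ s ∈ Set.Icc 0 T, m s 0 - m' s 0 = h) →
          (∃ s ∈ Set.Icc 0 T, c * (m s 1 - m' s 1) = h) := by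
        intro hne
        obtain ⟨t1, ht1, he, hl⟩ := exists_least_level _ T h hd1c hne
        exact ⟨t1, ht1, step1 t1 ht1 he hl⟩
      have T23 : (∃ s ∈ Set.Icc 0 T, c * (m s 1 - m' s 1) = h) →
          (∃ s ∈ Set.Icc 0 T, m' s 0 - m s 0 = h) := by
        intro hne
        obtain ⟨t2, ht2, he, hl⟩ := exists_least_level _ T h hd2c hne
        exact ⟨t2, ht2, step2 t2 ht2 he hl⟩
      have T34 : (∃ s ∈ Set.Icc 0 T, m' s 0 - m s 0 = h) →
          (∃ s ∈ Set.Icc 0 T, c * (m' s 1 - m s 1) = h) := by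
        intro hne
        obtain ⟨t3, ht3, he, hl⟩ := exists_least_level _ T h hd1c' hne
        exact ⟨t3, ht3, step3 t3 ht3 he hl⟩
      have T41 : (∃ s ∈ Set.Icc 0 T, c * (m' s 1 - m s 1) = h) →
          (∃ s ∈ Set.Icc 0 T, m s 0 - m' s 0 = h) := by
        intro hne
        obtain ⟨t4, ht4, he, hl⟩ := exists_least_level _ T h hd2c' hne
        exact ⟨t4, ht4, step4 t4 ht4 he hl⟩
      -- one of the four level sets is nonempty at the maximizer x₀
      have hZ1 : ∃ s ∈ Set.Icc 0 T, m s 0 - m' s 0 = h := by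
        rcases max_choice |m x₀ 0 - m' x₀ 0| (c * |m x₀ 1 - m' x₀ 1|) with hcase | hcase
        · have habs : |m x₀ 0 - m' x₀ 0| = h := by rw [hhdef, hcase]
          rcases (abs_eq hh.le).mp habs with h' | h'
          · exact ⟨x₀, hx₀, h'⟩
          · exact T41 (T34 ⟨x₀, hx₀, by linarith⟩)
        · have habs : |c * (m x₀ 1 - m' x₀ 1)| = h := by
            rw [abs_mul, abs_of_pos hcpos, hhdef, hcase]
          rcases (abs_eq hh.le).mp habs with h' | h'
          · exact T41 (T34 (T23 ⟨x₀, hx₀, h'⟩))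
          · exact T41 ⟨x₀, hx₀, by linarith⟩
      -- run the cycle once, tracking least times
      obtain ⟨t1, ht1, he1, hl1⟩ := exists_least_level _ T h hd1c hZ1
      have hz2 : c * (m t1 1 - m' t1 1) = h := step1 t1 ht1 he1 hl1
      obtain ⟨t2, ht2, he2, hl2⟩ := exists_least_level _ T h hd2c ⟨t1, ht1, hz2⟩
      have ht21 : t2 ≤ t1 := hl2 t1 ht1 hz2
      have hz3 : m' t2 0 - m t2 0 = h := step2 t2 ht2 he2 hl2
      obtain ⟨t3, ht3, he3, hl3⟩ := exists_least_level _ T h hd1c' ⟨t2, ht2, hz3⟩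
      have ht32 : t3 ≤ t2 := hl3 t2 ht2 hz3
      have hz4 : c * (m' t3 1 - m t3 1) = h := step3 t3 ht3 he3 hl3
      obtain ⟨t4, ht4, he4, hl4⟩ := exists_least_level _ T h hd2c' ⟨t3, ht3, hz4⟩
      have ht43 : t4 ≤ t3 := hl4 t3 ht3 hz4
      have hz1' : m t4 0 - m' t4 0 = h := step4 t4 ht4 he4 hl4
      have ht14 : t1 ≤ t4 := hl1 t4 ht4 hz1'
      have h13 : t1 = t3 := le_antisymm (by linarith) (by linarith)
      rw [← h13] at he3
      linarith
  intro t ht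
  refine ⟨?_, main t (Set.mem_Ici.mp ht)⟩
  rw [heqn t ht, heqn' t ht, main t (Set.mem_Ici.mp ht)]
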